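/- arXiv:1912.05519 — 3 statements merged into one kernel-verified Lean document; each statement's English description precedes it below -/
import Mathlib

section
/- Let R be a commutative ring, A an R-module equipped with a Poisson-type structure with parameter q, and suppose q = s^2 for some s ∈ R. Then the R-bilinear product x⋆y := x∘y + s·[x,y] on A is associative: (x⋆y)⋆z = x⋆(y⋆z) for all x, y, z ∈ A. -/
/-- A Poisson-type structure with parameter `q` on an `R`-module `A`:
an `R`-bilinear commutative product `∘`, an `R`-bilinear alternating bracket `[,]`
satisfying the Jacobi identity, the Leibniz rule, and the associator identity
`(x∘y)∘z − x∘(y∘z) = q·[y,[x,z]]`. -/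
structure PoissonType (R : Type*) (A : Type*) [CommRing R] [AddCommGroup A]
    [Module R A] (q : R) where
  mul : A →ₗ[R] A →ₗ[R] A
  bracket : A →ₗ[R] A →ₗ[R] A
  mul_comm : ∀ x y : A, mul x y = mul y x
  bracket_alt : ∀ x : A, bracket x x = 0
  jacobi : ∀ x y z : A,
    bracket (bracket x y) z + bracket (bracket y z) x + bracket (bracket z x) y = 0
  leibniz : ∀ x y z : A,
    bracket (mul x y) z = mul (bracket x z) y + mul x (bracket y z)
  assoc_id : ∀ x y z : A,
    mul (mul x y) z - mul x (mul y z) = q • bracket y (bracket x z)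

/-! Expanding `(x⋆y)⋆z - x⋆(y⋆z)` in powers of `s`: the `s⁰` part is the associator
`(x∘y)∘z - x∘(y∘z) = q·[y,[x,z]]`; the `s¹` part vanishes because `[·, z]` and `[x, ·]` are
derivations of the commutative product; the `s²` part is `[[x,y],z] - [x,[y,z]] = -[y,[x,z]]`
by Jacobi, which cancels the associator exactly when `q = s²`. -/

namespace PoissonType

variable {R A : Type*} [CommRing R] [AddCommGroup A] [Module R A] {q : R} (P : PoissonType R A q)

theorem bracket_swap (x y : A) : P.bracket y x = -P.bracket x y :=
  (LinearMap.IsAlt.neg P.bracket_alt x y).symm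

theorem bracket_mul (x y z : A) :
    P.bracket x (P.mul y z) = P.mul (P.bracket x y) z + P.mul y (P.bracket x z) := by
  rw [P.bracket_swap, P.leibniz, P.bracket_swap z x, P.bracket_swap y x]
  simp only [map_neg, LinearMap.neg_apply]
  abel

theorem bracket_bracket (x y z : A) :
    P.bracket x (P.bracket y z) = P.bracket (P.bracket x y) z + P.bracket y (P.bracket x z) := by
  have h := P.jacobi x y z
  rw [P.bracket_swap x (P.bracket y z), P.bracket_swap y (P.bracket z x), P.bracket_swap x z] at h
  simp only [map_neg] at h
  linear_combination (norm := module) -h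

def star (s : R) (x y : A) : A :=
  P.mul x y + s • P.bracket x y

theorem star_assoc {s : R} (hq : q = s ^ 2) (x y z : A) :
    P.star s (P.star s x y) z = P.star s x (P.star s y z) := by
  have derivation : P.bracket (P.mul x y) z + P.mul (P.bracket x y) z
      = P.bracket x (P.mul y z) + P.mul x (P.bracket y z) := by
    rw [P.leibniz, P.bracket_mul, P.mul_comm y]
    abel
  subst hq
  have associator := P.assoc_id x y z
  simp only [star, map_add, map_smul, LinearMap.add_apply, LinearMap.smul_apply]
  rw [P.bracket_bracket x y z]
  linear_combination (norm := module) s • derivation + associator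

end PoissonType

/-- If `q = s^2` is a square, then `x⋆y := x∘y + s·[x,y]` is associative. -/
theorem star_assoc_of_sq (R : Type*) (A : Type*) [CommRing R] [AddCommGroup A]
    [Module R A] (q s : R) (hq : q = s ^ 2) (P : PoissonType R A q) :
    ∀ x y z : A,
      (fun x y : A => P.mul x y + s • P.bracket x y)
          ((fun x y : A => P.mul x y + s • P.bracket x y) x y) z =
        (fun x y : A => P.mul x y + s • P.bracket x y) x
          ((fun x y : A => P.mul x y + s • P.bracket x y) y z) :=
  P.star_assoc hq
end

section
/- Let R be a commutative ring, A an R-module equipped with a Poisson-type structure (∘, [,]) with parameter q, and let λ ∈ R be a unit. Define a new bracket by ⟦x,y⟧ := λ·[x,y]. Then (∘, ⟦,⟧) is a Poisson-type structure on A with parameter q·λ^{-2}. -/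
namespace PoissonType

variable {R A : Type*} [CommRing R] [AddCommGroup A] [Module R A] {q : R}

/-- Scaling the bracket by `c` scales `[y,[x,z]]` by `c ^ 2`, which the parameter absorbs. -/
def rescale (P : PoissonType R A q) (c : R) {q' : R} (hq : q' * c ^ 2 = q) :
    PoissonType R A q' where
  mul := P.mul
  bracket := c • P.bracket
  mul_comm := P.mul_comm
  bracket_alt x := by simp [P.bracket_alt]
  jacobi x y z := by simp [← smul_add, P.jacobi]
  leibniz x y z := by simp [P.leibniz]
  assoc_id x y z := by
    simp only [LinearMap.smul_apply, map_smul, P.assoc_id, smul_smul, ← hq]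
    ring_nf

@[simp]
theorem rescale_mul (P : PoissonType R A q) (c : R) {q' : R} (hq : q' * c ^ 2 = q) :
    (P.rescale c hq).mul = P.mul :=
  rfl

@[simp]
theorem rescale_bracket_apply (P : PoissonType R A q) (c : R) {q' : R}
    (hq : q' * c ^ 2 = q) (x y : A) :
    (P.rescale c hq).bracket x y = c • P.bracket x y :=
  rfl

end PoissonType

/-- Rescaling the bracket of a Poisson-type structure of parameter `q` by a unit `λ`
yields a Poisson-type structure with the same product and parameter `q·λ⁻²`. -/
theorem rescale_bracket (R : Type*) (A : Type*) [CommRing R] [AddCommGroup A]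
    [Module R A] (q : R) (P : PoissonType R A q) (l : Rˣ) :
    ∃ P' : PoissonType R A (q * ((l⁻¹ : Rˣ) : R) ^ 2),
      P'.mul = P.mul ∧
        ∀ x y : A, P'.bracket x y = (l : R) • P.bracket x y := by
  have hq : q * ((l⁻¹ : Rˣ) : R) ^ 2 * (l : R) ^ 2 = q := by
    rw [mul_assoc, ← mul_pow, Units.inv_mul, one_pow, mul_one]
  exact ⟨P.rescale l hq, P.rescale_mul l hq, P.rescale_bracket_apply l hq⟩
end

section
/- Let R be a commutative ring and A an R-module equipped with an R-bilinear commutative associative product ∘ and an R-bilinear alternating bracket [,] satisfying the Leibniz rule [x∘y, z] = [x,z]∘y + x∘[y,z] and the two-step nilpotency relation [[x,y],z] = 0 for all x, y, z ∈ A. Then for all x, y, z, w ∈ A one has [x,z]∘[y,w] + [x,w]∘[y,z] = 0. -/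
theorem bracket_bracket_mul_of_leibniz {R A : Type*} [CommSemiring R] [AddCommMonoid A]
    [Module R A] {mul bracket : A →ₗ[R] A →ₗ[R] A}
    (hleib : ∀ x y z : A,
      bracket (mul x y) z = mul (bracket x z) y + mul x (bracket y z))
    (x y z w : A) :
    bracket (bracket (mul x y) z) w =
      mul (bracket (bracket x z) w) y + mul (bracket x z) (bracket y w) +
        (mul (bracket x w) (bracket y z) + mul x (bracket (bracket y z) w)) := by
  rw [hleib, map_add, LinearMap.add_apply, hleib, hleib]

theorem nlie2_obstruction_general (R : Type*) (A : Type*) [CommRing R] [AddCommGroup A]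
    [Module R A] (mul : A →ₗ[R] A →ₗ[R] A) (bracket : A →ₗ[R] A →ₗ[R] A)
    (hleib : ∀ x y z : A,
      bracket (mul x y) z = mul (bracket x z) y + mul x (bracket y z))
    (hnil : ∀ x y z : A, bracket (bracket x y) z = 0) :
    ∀ x y z w : A,
      mul (bracket x z) (bracket y w) + mul (bracket x w) (bracket y z) = 0 := by
  intro x y z w
  have h := bracket_bracket_mul_of_leibniz hleib x y z w
  rw [hnil, hnil, hnil] at h
  simpa [add_assoc] using h.symm

/-- Let `A` be a module over a commutative ring `R` with an `R`-bilinear commutative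
associative product `∘` and an `R`-bilinear alternating bracket `[,]` satisfying the
Leibniz rule `[x∘y,z] = [x,z]∘y + x∘[y,z]` and two-step nilpotency `[[x,y],z] = 0`.
Then `[x,z]∘[y,w] + [x,w]∘[y,z] = 0` for all `x, y, z, w`. -/
theorem nlie2_obstruction (R : Type*) (A : Type*) [CommRing R] [AddCommGroup A]
    [Module R A] (mul : A →ₗ[R] A →ₗ[R] A) (bracket : A →ₗ[R] A →ₗ[R] A)
    (hcomm : ∀ x y : A, mul x y = mul y x)
    (hassoc : ∀ x y z : A, mul (mul x y) z = mul x (mul y z))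
    (halt : ∀ x : A, bracket x x = 0)
    (hleib : ∀ x y z : A,
      bracket (mul x y) z = mul (bracket x z) y + mul x (bracket y z))
    (hnil : ∀ x y z : A, bracket (bracket x y) z = 0) :
    ∀ x y z w : A,
      mul (bracket x z) (bracket y w) + mul (bracket x w) (bracket y z) = 0 :=
  nlie2_obstruction_general R A mul bracket hleib hnil
end
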